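/- One-shot Berger–Tung achievability: Let q_{S₁S₂} be a pmf on finite sets 𝒮₁ × 𝒮₂, let d_k : 𝒮_k × Ŝ_k → [0,∞) be distortion measures and D₁, D₂ ≥ 0 distortion levels. For any conditional pmfs q_{U₁|S₁}, q_{U₂|S₂} to finite sets 𝒰₁, 𝒰₂, any reconstruction functions ŝ_k : 𝒰₁ × 𝒰₂ → Ŝ_k (k = 1,2), and any integers J₁ ≥ M₁ ≥ 1 and J₂ ≥ M₂ ≥ 1, define q(s₁,s₂,u₁,u₂) = q(s₁,s₂)·q(u₁|s₁)·q(u₂|s₂). Then there exists an (M₁,M₂)-code whose probability of no-excess distortion satisfies P[ d₁(S₁,Ŝ₁) ≤ D₁ and d₂(S₂,Ŝ₂) ≤ D₂ ] ≥ E_q [ 1{ d₁(S₁, ŝ₁(U₁,U₂)) ≤ D₁ and d₂(S₂, ŝ₂(U₁,U₂)) ≤ D₂ } / ( (1 + J₁^{−1}·2^{i_q(S₁;U₁)}) · (1 + J₂^{−1}·2^{i_q(S₂;U₂)}) · (1 + (J₂M₂^{−1} + J₁M₁^{−1} + J₁J₂(M₁M₂)^{−1})·2^{−i_q(U₁;U₂)})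 ) ]. -/

import Mathlib

open scoped BigOperators

/-- A pmf on a finite type, represented by a nonnegative real-valued function summing to 1. -/
structure FinPMF (α : Type) [Fintype α] where
  p : α → ℝ
  nonneg : ∀ a, 0 ≤ p a
  sum_eq_one : ∑ a, p a = 1

open Classical in
/-- Indicator of a proposition, as a real number. -/
noncomputable def ind (P : Prop) : ℝ := if P then 1 else 0

variable {S1 S2 U1 U2 R1 R2 : Type}
  [Fintype S1] [Fintype S2] [Fintype U1] [Fintype U2] [Fintype R1] [Fintype R2]

/-- The joint pmf `q(s₁,s₂,u₁,u₂) = q(s₁,s₂) q(u₁|s₁) q(u₂|s₂)`. -/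
noncomputable def qBT (qS : FinPMF (S1 × S2)) (qU1 : S1 → FinPMF U1)
    (qU2 : S2 → FinPMF U2) (s1 : S1) (s2 : S2) (u1 : U1) (u2 : U2) : ℝ :=
  qS.p (s1, s2) * (qU1 s1).p u1 * (qU2 s2).p u2

noncomputable def mS1 (qS : FinPMF (S1 × S2)) (s1 : S1) : ℝ :=
  ∑ s2 : S2, qS.p (s1, s2)

noncomputable def mS2 (qS : FinPMF (S1 × S2)) (s2 : S2) : ℝ :=
  ∑ s1 : S1, qS.p (s1, s2)

noncomputable def mU1m (qS : FinPMF (S1 × S2)) (qU1 : S1 → FinPMF U1) (u1 : U1) : ℝ :=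
  ∑ s1 : S1, mS1 qS s1 * (qU1 s1).p u1

noncomputable def mU2m (qS : FinPMF (S1 × S2)) (qU2 : S2 → FinPMF U2) (u2 : U2) : ℝ :=
  ∑ s2 : S2, mS2 qS s2 * (qU2 s2).p u2

noncomputable def mU1U2 (qS : FinPMF (S1 × S2)) (qU1 : S1 → FinPMF U1)
    (qU2 : S2 → FinPMF U2) (u1 : U1) (u2 : U2) : ℝ :=
  ∑ s1 : S1, ∑ s2 : S2, qBT qS qU1 qU2 s1 s2 u1 u2

/-- Information density `i_q(S₁;U₁)`. -/
noncomputable def iS1U1 (qS : FinPMF (S1 × S2)) (qU1 : S1 → FinPMF U1)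
    (s1 : S1) (u1 : U1) : ℝ :=
  Real.logb 2 ((mS1 qS s1 * (qU1 s1).p u1) / (mS1 qS s1 * mU1m qS qU1 u1))

/-- Information density `i_q(S₂;U₂)`. -/
noncomputable def iS2U2 (qS : FinPMF (S1 × S2)) (qU2 : S2 → FinPMF U2)
    (s2 : S2) (u2 : U2) : ℝ :=
  Real.logb 2 ((mS2 qS s2 * (qU2 s2).p u2) / (mS2 qS s2 * mU2m qS qU2 u2))

/-- Information density `i_q(U₁;U₂)`. -/
noncomputable def iU1U2 (qS : FinPMF (S1 × S2)) (qU1 : S1 → FinPMF U1)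
    (qU2 : S2 → FinPMF U2) (u1 : U1) (u2 : U2) : ℝ :=
  Real.logb 2 (mU1U2 qS qU1 qU2 u1 u2 / (mU1m qS qU1 u1 * mU2m qS qU2 u2))

/-- Probability of no-excess distortion
`P[d₁(S₁,Ŝ₁) ≤ D₁ and d₂(S₂,Ŝ₂) ≤ D₂]` of an `(M₁,M₂)`-code for distributed lossy
compression: `(Ŝ₁,Ŝ₂) = ψ(φ₁(S₁), φ₂(S₂))` with stochastic encoders/decoder. -/
noncomputable def pNoExcessBT (M1 M2 : ℕ) (qS : FinPMF (S1 × S2))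
    (d1 : S1 → R1 → ℝ) (d2 : S2 → R2 → ℝ) (D1 D2 : ℝ)
    (enc1 : S1 → FinPMF (Fin M1)) (enc2 : S2 → FinPMF (Fin M2))
    (dec : Fin M1 × Fin M2 → FinPMF (R1 × R2)) : ℝ :=
  ∑ s1 : S1, ∑ s2 : S2, ∑ m1 : Fin M1, ∑ m2 : Fin M2, ∑ r1 : R1, ∑ r2 : R2,
    qS.p (s1, s2) * (enc1 s1).p m1 * (enc2 s2).p m2 * (dec (m1, m2)).p (r1, r2) *
      ind (d1 s1 r1 ≤ D1 ∧ d2 s2 r2 ≤ D2)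

/-!
Random binning with likelihood encoders and a likelihood decoder. Draw `J_k` codewords i.i.d.
from `q_{U_k}` and throw each into a uniformly random bin of `[1:M_k]`. Encoder `k` picks
codeword `j` with probability proportional to `a_j = 2 ^ i(s_k; u_k(j))` and sends its bin; the
decoder picks a codeword pair in the received bin pair with probability proportional to
`r = 2 ^ i(u₁; u₂)` and reconstructs through `ŝ₁, ŝ₂`. The decoder recovers exactly the
encoders' pair with probability at least `(a/Z₁) (b/Z₂) (r/W)`, where `Z₁, Z₂, W` are the sums
of the scores the three choices compete against. Conditioned on the chosen codewords being
`(u₁, u₂)`, these sums have means at most `a + J₁`, `b + J₂` and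
`r + J₂/M₂ + J₁/M₁ + J₁J₂/(M₁M₂)`, so convexity of `(x, y, z) ↦ (x y z)⁻¹` (Jensen, through
its tangent plane at the means) bounds the expected recovery probability from below. Summing
over sources and codeword pairs gives the right-hand side, and some realisation of the random
codebooks does at least as well as the average.
-/

open Finset

section Indicator

variable {α : Type} [Fintype α]

lemma ind_nonneg (P : Prop) : 0 ≤ ind P := by
  unfold ind
  split <;> norm_num

lemma sum_ind_mul (a : α) (f : α → ℝ) : ∑ x, ind (a = x) * f x = f a := by
  classical
  simp [ind, ite_mul]

lemma sum_ind_mul' (a : α) (f : α → ℝ) : ∑ x, ind (x = a) * f x = f a := by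
  classical
  simp [ind, ite_mul]

lemma sum_ind (a : α) : ∑ x, ind (a = x) = 1 := by
  simpa using sum_ind_mul a (fun _ => 1)

end Indicator

lemma sum_ite_eq_le {ι : Type} [Fintype ι] [DecidableEq ι] (i : ι) {A B : ℝ} (hB : 0 ≤ B) :
    ∑ j, (if j = i then A else B) ≤ A + Fintype.card ι * B := by
  calc ∑ j, (if j = i then A else B) ≤ ∑ j, ((if j = i then A else 0) + B) :=
        sum_le_sum fun j _ => by split_ifs <;> linarith
    _ = A + Fintype.card ι * B := by simp [sum_add_distrib]

lemma mul_div_le_of_nonneg {x Q : ℝ} (hx : 0 ≤ x) (hQ : 0 ≤ Q) : Q * (x / Q) ≤ x := by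
  rcases hQ.eq_or_lt with h | h
  · simp [← h, hx]
  · rw [mul_div_cancel₀ _ h.ne']

/-- The tangent plane of the convex function `(x, y, z) ↦ (x y z)⁻¹` at `(p, q, w)` lies below
it; this is AM-GM for `x/p`, `y/q`, `z/w` and `p q w / (x y z)`. -/
lemma tangent_le_inv_mul_mul {x y z p q w : ℝ} (hx : 0 < x) (hy : 0 < y) (hz : 0 < z)
    (hp : 0 < p) (hq : 0 < q) (hw : 0 < w) :
    (p * q * w)⁻¹ * (4 - x / p - y / q - z / w) ≤ (x * y * z)⁻¹ := by
  have hamgm := Real.geom_mean_le_arith_mean4_weighted (w₁ := 1 / 4) (w₂ := 1 / 4)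
    (w₃ := 1 / 4) (w₄ := 1 / 4) (p₁ := x / p) (p₂ := y / q) (p₃ := z / w)
    (p₄ := p * q * w / (x * y * z)) (by norm_num) (by norm_num) (by norm_num) (by norm_num)
    (by positivity) (by positivity) (by positivity) (by positivity) (by norm_num)
  rw [← Real.mul_rpow (by positivity) (by positivity),
    ← Real.mul_rpow (by positivity) (by positivity),
    ← Real.mul_rpow (by positivity) (by positivity)] at hamgm
  have hone : x / p * (y / q) * (z / w) * (p * q * w / (x * y * z)) = 1 := by
    field_simp
  rw [hone, Real.one_rpow] at hamgm
  rw [inv_mul_le_iff₀ (by positivity)]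
  have : p * q * w * (x * y * z)⁻¹ = p * q * w / (x * y * z) := by ring
  linarith

namespace FinPMF

variable {α β : Type} [Fintype α] [Fintype β]

noncomputable def expect (P : FinPMF α) (F : α → ℝ) : ℝ := ∑ a, P.p a * F a

variable (P : FinPMF α) (Q : FinPMF β)

lemma expect_mono {F G : α → ℝ} (h : ∀ a, F a ≤ G a) : P.expect F ≤ P.expect G :=
  sum_le_sum fun a _ => mul_le_mul_of_nonneg_left (h a) (P.nonneg a)

lemma expect_nonneg {F : α → ℝ} (h : ∀ a, 0 ≤ F a) : 0 ≤ P.expect F :=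
  sum_nonneg fun a _ => mul_nonneg (P.nonneg a) (h a)

lemma expect_const (c : ℝ) : P.expect (fun _ => c) = c := by
  simp [expect, ← sum_mul, P.sum_eq_one]

lemma expect_const_mul (c : ℝ) (F : α → ℝ) : P.expect (fun a => c * F a) = c * P.expect F := by
  simp only [expect, mul_sum]
  exact sum_congr rfl fun a _ => by ring

lemma expect_sub (F G : α → ℝ) : P.expect (fun a => F a - G a) = P.expect F - P.expect G := by
  simp only [expect, mul_sub, sum_sub_distrib]

lemma expect_div_const (F : α → ℝ) (c : ℝ) : P.expect (fun a => F a / c) = P.expect F / c := by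
  simp only [expect, mul_div_assoc', sum_div]

lemma expect_sum {ι : Type} [Fintype ι] (F : ι → α → ℝ) :
    P.expect (fun a => ∑ i, F i a) = ∑ i, P.expect (F i) := by
  simp only [expect, mul_sum]
  exact sum_comm

lemma expect_ind_mul (x : α) (φ : α → ℝ) :
    P.expect (fun a => ind (a = x) * φ a) = P.p x * φ x := by
  simp only [expect]
  simp_rw [mul_left_comm (P.p _), sum_ind_mul']

lemma expect_ind (x : α) : P.expect (fun a => ind (a = x)) = P.p x := by
  simpa using P.expect_ind_mul x (fun _ => 1)

lemma exists_expect_le (F : α → ℝ) : ∃ a, P.expect F ≤ F a := by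
  have : Nonempty α := by
    by_contra h
    simpa [not_nonempty_iff.mp h] using P.sum_eq_one
  obtain ⟨a, -, ha⟩ := exists_max_image univ F univ_nonempty
  refine ⟨a, ?_⟩
  calc P.expect F ≤ P.expect (fun _ => F a) := P.expect_mono fun b => ha b (mem_univ b)
    _ = F a := P.expect_const _

lemma mul_le_expect {F : α → ℝ} (hF : ∀ a, 0 ≤ F a) (a : α) : P.p a * F a ≤ P.expect F :=
  single_le_sum (fun b _ => mul_nonneg (P.nonneg b) (hF b)) (mem_univ a)

lemma sum_mul_le_expect {x G F : α → ℝ} (hx₀ : ∀ a, 0 ≤ x a) (hx : ∀ a, x a ≤ P.p a)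
    (hG : ∀ a, G a ≤ F a) (hF : ∀ a, 0 ≤ F a) : ∑ a, x a * G a ≤ P.expect F :=
  sum_le_sum fun a _ => (mul_le_mul_of_nonneg_left (hG a) (hx₀ a)).trans
    (mul_le_mul_of_nonneg_right (hx a) (hF a))

noncomputable def prod : FinPMF (α × β) where
  p x := P.p x.1 * Q.p x.2
  nonneg x := mul_nonneg (P.nonneg _) (Q.nonneg _)
  sum_eq_one := by
    rw [Fintype.sum_prod_type, ← Fintype.sum_mul_sum, P.sum_eq_one, Q.sum_eq_one, one_mul]

lemma expect_prod_mul (F : α → ℝ) (G : β → ℝ) :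
    (P.prod Q).expect (fun x => F x.1 * G x.2) = P.expect F * Q.expect G := by
  simp only [expect, prod, Fintype.sum_prod_type, Fintype.sum_mul_sum]
  exact sum_congr rfl fun a _ => sum_congr rfl fun b _ => by ring

lemma expect_prod_fst (F : α → ℝ) : (P.prod Q).expect (fun x => F x.1) = P.expect F := by
  simpa [Q.expect_const] using P.expect_prod_mul Q F (fun _ => 1)

lemma expect_prod_mul_mul_apply {γ δ : Type} [Fintype γ] [Fintype δ] (F : α → ℝ) (G : β → ℝ)
    (φ : α → γ) (ψ : β → δ) (h : γ → δ → ℝ) :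
    (P.prod Q).expect (fun x => F x.1 * G x.2 * h (φ x.1) (ψ x.2)) =
      ∑ c, ∑ d, h c d * (P.expect (fun a => F a * ind (φ a = c)) *
        Q.expect (fun b => G b * ind (ψ b = d))) := by
  have hexp : ∀ x : α × β, F x.1 * G x.2 * h (φ x.1) (ψ x.2) =
      ∑ c, ∑ d, h c d * ((F x.1 * ind (φ x.1 = c)) * (G x.2 * ind (ψ x.2 = d))) := fun x => by
    simp_rw [show ∀ c d, h c d * ((F x.1 * ind (φ x.1 = c)) * (G x.2 * ind (ψ x.2 = d))) =
      ind (φ x.1 = c) * (ind (ψ x.2 = d) * (F x.1 * G x.2 * h c d)) from fun c d => by ring,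
      ← mul_sum, sum_ind_mul]
  simp_rw [hexp, expect_sum, expect_const_mul]
  exact sum_congr rfl fun c _ => sum_congr rfl fun d _ => by rw [← expect_prod_mul]

noncomputable def pi (ι : Type) [Fintype ι] [DecidableEq ι] : FinPMF (ι → β) where
  p f := ∏ i, Q.p (f i)
  nonneg f := prod_nonneg fun i _ => Q.nonneg _
  sum_eq_one := by rw [← Fintype.prod_sum (fun _ b => Q.p b)]; simp [Q.sum_eq_one]

noncomputable def uniform (α : Type) [Fintype α] [Nonempty α] : FinPMF α where
  p _ := (Fintype.card α : ℝ)⁻¹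
  nonneg _ := by positivity
  sum_eq_one := by simp

noncomputable def map (f : α → β) : FinPMF β where
  p b := ∑ a, ind (f a = b) * P.p a
  nonneg b := sum_nonneg fun a _ => mul_nonneg (ind_nonneg _) (P.nonneg a)
  sum_eq_one := by rw [sum_comm]; simp_rw [← sum_mul, sum_ind, one_mul, P.sum_eq_one]

lemma expect_map (f : α → β) (G : β → ℝ) :
    (P.map f).expect G = P.expect (fun a => G (f a)) := by
  simp only [expect, map, sum_mul]
  rw [sum_comm]
  simp_rw [show ∀ a b, ind (f a = b) * P.p a * G b = ind (f a = b) * (P.p a * G b) from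
    fun a b => by ring, sum_ind_mul]

open Classical in
noncomputable def normalize [Nonempty α] (x : α → ℝ) (hx : ∀ a, 0 ≤ x a) : FinPMF α where
  p a := if 0 < ∑ b, x b then x a / ∑ b, x b else (uniform α).p a
  nonneg a := by
    split_ifs
    · exact div_nonneg (hx a) (sum_nonneg fun b _ => hx b)
    · exact (uniform α).nonneg a
  sum_eq_one := by
    split_ifs with h
    · rw [← sum_div, div_self h.ne']
    · exact (uniform α).sum_eq_one

lemma div_sum_le_normalize [Nonempty α] (x : α → ℝ) (hx : ∀ a, 0 ≤ x a) (a : α) :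
    x a / ∑ b, x b ≤ (normalize x hx).p a := by
  dsimp only [normalize]
  split_ifs with h
  · exact le_rfl
  · rw [le_antisymm (not_lt.mp h) (sum_nonneg fun b _ => hx b), div_zero]
    exact (uniform α).nonneg a

noncomputable def fst (P : FinPMF (α × β)) : FinPMF α where
  p a := ∑ b, P.p (a, b)
  nonneg a := sum_nonneg fun b _ => P.nonneg _
  sum_eq_one := by rw [← Fintype.sum_prod_type', P.sum_eq_one]

noncomputable def snd (P : FinPMF (α × β)) : FinPMF β where
  p b := ∑ a, P.p (a, b)
  nonneg b := sum_nonneg fun a _ => P.nonneg _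
  sum_eq_one := by rw [sum_comm, ← Fintype.sum_prod_type', P.sum_eq_one]

noncomputable def bind (K : α → FinPMF β) : FinPMF β where
  p b := ∑ a, P.p a * (K a).p b
  nonneg b := sum_nonneg fun a _ => mul_nonneg (P.nonneg a) ((K a).nonneg b)
  sum_eq_one := by rw [sum_comm]; simp_rw [← mul_sum, (K _).sum_eq_one, mul_one, P.sum_eq_one]

lemma p_le_fst (P : FinPMF (α × β)) (a : α) (b : β) : P.p (a, b) ≤ P.fst.p a :=
  single_le_sum (fun b' _ => P.nonneg (a, b')) (mem_univ b)

lemma p_le_snd (P : FinPMF (α × β)) (a : α) (b : β) : P.p (a, b) ≤ P.snd.p b :=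
  single_le_sum (fun a' _ => P.nonneg (a', b)) (mem_univ a)

lemma mul_le_bind (K : α → FinPMF β) (a : α) (b : β) : P.p a * (K a).p b ≤ (P.bind K).p b :=
  single_le_sum (fun a' _ => mul_nonneg (P.nonneg a') ((K a').nonneg b)) (mem_univ a)

def IsSubDensity (w : FinPMF α) (f : α → ℝ) : Prop :=
  (∀ a, 0 ≤ f a) ∧ w.expect f ≤ 1

lemma expect_div_p_le (w : FinPMF α) {x : α → ℝ} (hx : ∀ a, 0 ≤ x a) :
    w.expect (fun a => x a / w.p a) ≤ ∑ a, x a :=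
  sum_le_sum fun a _ => mul_div_le_of_nonneg (hx a) (w.nonneg a)

lemma sum_sum_mul_ind_add_mul_le {h : α → β → ℝ}
    (hrow : ∀ a, Q.expect (h a) ≤ 1) (hcol : ∀ b, P.expect (fun a => h a b) ≤ 1)
    (a₀ : α) (b₀ : β) {s t : ℝ} (hs : 0 ≤ s) (ht : 0 ≤ t) :
    ∑ a, ∑ b, h a b * ((ind (a₀ = a) + s * P.p a) * (ind (b₀ = b) + t * Q.p b)) ≤
      h a₀ b₀ + t + s + s * t := by
  have hexpand : ∑ a, ∑ b, h a b * ((ind (a₀ = a) + s * P.p a) * (ind (b₀ = b) + t * Q.p b)) =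
      h a₀ b₀ + t * Q.expect (h a₀) + s * P.expect (fun a => h a b₀) +
        s * t * P.expect (fun a => Q.expect (h a)) := by
    have hterm : ∀ a b, h a b * ((ind (a₀ = a) + s * P.p a) * (ind (b₀ = b) + t * Q.p b)) =
        ind (a₀ = a) * (ind (b₀ = b) * h a b) + t * (ind (a₀ = a) * (Q.p b * h a b)) +
          s * (ind (b₀ = b) * (P.p a * h a b)) + s * t * (P.p a * (Q.p b * h a b)) :=
      fun a b => by ring
    simp only [hterm, sum_add_distrib, ← mul_sum, sum_ind_mul, expect]
  have htot : P.expect (fun a => Q.expect (h a)) ≤ 1 :=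
    (P.expect_mono hrow).trans (P.expect_const 1).le
  rw [hexpand]
  nlinarith [hrow a₀, hcol b₀, mul_nonneg hs ht]

section Pi

variable {ι : Type} [Fintype ι] [DecidableEq ι]

lemma expect_pi_prod (φ : ι → β → ℝ) :
    (Q.pi ι).expect (fun f => ∏ i, φ i (f i)) = ∏ i, Q.expect (φ i) := by
  simp only [expect, pi, ← prod_mul_distrib]
  exact (Fintype.prod_sum fun i b => Q.p b * φ i b).symm

lemma expect_pi_apply (i : ι) (φ : β → ℝ) :
    (Q.pi ι).expect (fun f => φ (f i)) = Q.expect φ := by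
  have h := Q.expect_pi_prod (ι := ι) (fun j b => if j = i then φ b else 1)
  have hfactor : ∀ j, Q.expect (fun b => if j = i then φ b else 1) =
      if j = i then Q.expect φ else 1 := by
    intro j
    split_ifs
    · rfl
    · exact Q.expect_const 1
  simpa only [Fintype.prod_ite_eq', hfactor] using h

lemma expect_pi_apply_mul_apply {i i' : ι} (hi : i ≠ i') (φ ψ : β → ℝ) :
    (Q.pi ι).expect (fun f => φ (f i) * ψ (f i')) = Q.expect φ * Q.expect ψ := by
  have h := Q.expect_pi_prod (fun j b => (if j = i then φ b else 1) * (if j = i' then ψ b else 1))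
  have hfactor : ∀ j, Q.expect (fun b => (if j = i then φ b else 1) * (if j = i' then ψ b else 1))
      = (if j = i then Q.expect φ else 1) * (if j = i' then Q.expect ψ else 1) := by
    intro j
    by_cases hj : j = i
    · subst hj; simp [hi]
    · by_cases hj' : j = i' <;> simp [hj, hj', hi.symm, Q.expect_const]
  simp only [prod_mul_distrib, Fintype.prod_ite_eq', hfactor] at h
  exact h

lemma expect_pi_ind_mul (i i' : ι) (x : β) (φ : β → ℝ) :
    (Q.pi ι).expect (fun f => ind (f i = x) * φ (f i')) =
      Q.p x * (if i' = i then φ x else Q.expect φ) := by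
  by_cases hi : i' = i
  · subst hi
    rw [if_pos rfl, Q.expect_pi_apply i' (fun b => ind (b = x) * φ b), Q.expect_ind_mul]
  · rw [if_neg hi]
    exact (Q.expect_pi_apply_mul_apply (Ne.symm hi) (fun b => ind (b = x)) φ).trans
      (by rw [Q.expect_ind])

lemma expect_pi_ind_mul_ind (i i' : ι) (x y : β) :
    (Q.pi ι).expect (fun f => ind (f i = x) * ind (f i' = y)) =
      Q.p x * (if i' = i then ind (x = y) else Q.p y) :=
  (Q.expect_pi_ind_mul i i' x (fun b => ind (b = y))).trans (by rw [Q.expect_ind])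

lemma expect_pi_uniform_ind_eq [Nonempty β] (i i' : ι) :
    ((uniform β).pi ι).expect (fun f => ind (f i' = f i)) =
      if i' = i then 1 else (Fintype.card β : ℝ)⁻¹ := by
  by_cases hi : i' = i
  · subst hi
    simp [ind, expect_const]
  · have hsplit : ∀ f : ι → β, ind (f i' = f i) = ∑ b, ind (f i = b) * ind (f i' = b) :=
      fun f => (sum_ind_mul (f i) fun b => ind (f i' = b)).symm
    simp_rw [hsplit, expect_sum, expect_pi_ind_mul_ind, if_neg hi]
    simp [uniform]

end Pi

end FinPMF

open FinPMF

lemma pNoExcessBT_eq (M1 M2 : ℕ) (qS : FinPMF (S1 × S2)) (d1 : S1 → R1 → ℝ) (d2 : S2 → R2 → ℝ)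
    (D1 D2 : ℝ) (enc1 : S1 → FinPMF (Fin M1)) (enc2 : S2 → FinPMF (Fin M2))
    (dec : Fin M1 × Fin M2 → FinPMF (R1 × R2)) :
    pNoExcessBT M1 M2 qS d1 d2 D1 D2 enc1 enc2 dec =
      ∑ s1, ∑ s2, qS.p (s1, s2) * (enc1 s1).expect fun m1 => (enc2 s2).expect fun m2 =>
        (dec (m1, m2)).expect fun r => ind (d1 s1 r.1 ≤ D1 ∧ d2 s2 r.2 ≤ D2) := by
  simp only [pNoExcessBT, FinPMF.expect, Fintype.sum_prod_type, mul_sum, mul_assoc]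

abbrev BinnedCodebook (U : Type) (J M : ℕ) : Type := (Fin J → U) × (Fin J → Fin M)

namespace BinnedCodebook

section Law

variable {U : Type} [Fintype U] {J M : ℕ} [NeZero M]

noncomputable def law (w : FinPMF U) (J M : ℕ) [NeZero M] : FinPMF (BinnedCodebook U J M) :=
  (w.pi (Fin J)).prod ((uniform (Fin M)).pi (Fin J))

variable (w : FinPMF U)

lemma expect_ind_codeword (i : Fin J) (u : U) :
    (law w J M).expect (fun C => ind (C.1 i = u)) = w.p u := by
  rw [law, expect_prod_fst _ _ (fun c : Fin J → U => ind (c i = u)),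
    expect_pi_apply _ i (fun b => ind (b = u)), expect_ind]

lemma expect_ind_codeword_mul_sum_le (i : Fin J) (u : U) {φ : U → ℝ} (hφ : ∀ v, 0 ≤ φ v) :
    (law w J M).expect (fun C => ind (C.1 i = u) * ∑ j, φ (C.1 j)) ≤
      w.p u * (φ u + J * w.expect φ) := by
  rw [law, expect_prod_fst _ _ (fun c : Fin J → U => ind (c i = u) * ∑ j, φ (c j))]
  simp_rw [mul_sum, expect_sum, expect_pi_ind_mul, ← mul_sum]
  have := sum_ite_eq_le i (A := φ u) (w.expect_nonneg hφ)
  rw [Fintype.card_fin] at this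
  exact mul_le_mul_of_nonneg_left this (w.nonneg u)

lemma expect_ind_codeword_mul_binMatch_mul_ind_codeword (i i' : Fin J) (u v : U) :
    (law w J M).expect (fun C => ind (C.1 i = u) * ind (C.2 i' = C.2 i) * ind (C.1 i' = v)) =
      w.p u * (if i' = i then ind (u = v) else w.p v / M) := by
  have hsplit : ∀ C : BinnedCodebook U J M,
      ind (C.1 i = u) * ind (C.2 i' = C.2 i) * ind (C.1 i' = v) =
        ind (C.1 i = u) * ind (C.1 i' = v) * ind (C.2 i' = C.2 i) := fun C => by ring
  simp_rw [hsplit]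
  rw [law, expect_prod_mul _ _ (fun c : Fin J → U => ind (c i = u) * ind (c i' = v))
      (fun b : Fin J → Fin M => ind (b i' = b i)),
    expect_pi_ind_mul_ind, expect_pi_uniform_ind_eq]
  split_ifs <;> simp [div_eq_mul_inv, mul_assoc]

/-- The expected number of codewords equal to `v` in the bin of the `i`-th codeword, on the event
that the latter is `u`. -/
noncomputable def binMateMass (i : Fin J) (u v : U) : ℝ :=
  ∑ i', (law w J M).expect (fun C => ind (C.1 i = u) * ind (C.2 i' = C.2 i) * ind (C.1 i' = v))

lemma binMateMass_nonneg (i : Fin J) (u v : U) : 0 ≤ binMateMass (M := M) w i u v :=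
  sum_nonneg fun _ _ => expect_nonneg _ fun _ =>
    mul_nonneg (mul_nonneg (ind_nonneg _) (ind_nonneg _)) (ind_nonneg _)

lemma binMateMass_le (i : Fin J) (u v : U) :
    binMateMass (M := M) w i u v ≤ w.p u * (ind (u = v) + J / M * w.p v) := by
  simp_rw [binMateMass, expect_ind_codeword_mul_binMatch_mul_ind_codeword, ← mul_sum]
  have := sum_ite_eq_le i (A := ind (u = v)) (B := w.p v / M)
    (div_nonneg (w.nonneg v) (Nat.cast_nonneg M))
  rw [Fintype.card_fin, ← mul_div_assoc, mul_div_right_comm] at this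
  exact mul_le_mul_of_nonneg_left this (w.nonneg u)

end Law

noncomputable def likelihoodEncoder {S V : Type} {J M : ℕ} [NeZero J]
    (C : BinnedCodebook V J M) (α : S → V → ℝ) (hα : ∀ s v, 0 ≤ α s v) (s : S) : FinPMF (Fin M) :=
  (normalize (fun i => α s (C.1 i)) fun _ => hα s _).map C.2

end BinnedCodebook

abbrev CodebookPair (V W : Type) (J1 J2 M1 M2 : ℕ) : Type :=
  BinnedCodebook V J1 M1 × BinnedCodebook W J2 M2

/-- Bounds the mean score of the wrong index pairs in the decoder's bin pair: `J₂/M₂` for those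
sharing the first index, `J₁/M₁` for those sharing the second, `J₁J₂/(M₁M₂)` for the rest. -/
noncomputable def binningCost (J1 J2 M1 M2 : ℕ) : ℝ :=
  (J2 : ℝ) * (M2 : ℝ)⁻¹ + (J1 : ℝ) * (M1 : ℝ)⁻¹ + (J1 : ℝ) * (J2 : ℝ) * ((M1 : ℝ) * (M2 : ℝ))⁻¹

namespace CodebookPair

section Weights

variable {V W : Type} {J1 J2 M1 M2 : ℕ} (β : V → W → ℝ) (θ : CodebookPair V W J1 J2 M1 M2)

noncomputable def decoderWeight (n : Fin M1 × Fin M2) (j : Fin J1 × Fin J2) : ℝ :=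
  ind (θ.1.2 j.1 = n.1) * ind (θ.2.2 j.2 = n.2) * β (θ.1.1 j.1) (θ.2.1 j.2)

noncomputable def binWeight (j : Fin J1 × Fin J2) : ℝ :=
  ∑ j', decoderWeight β θ (θ.1.2 j.1, θ.2.2 j.2) j'

/-- With likelihood encoders of scores `α1`, `α2` and a likelihood decoder of score `β`, this is
a lower bound on the probability that the encoders pick the index pair `j` and the decoder
recovers it. -/
noncomputable def recoveryWeight (α1 : V → ℝ) (α2 : W → ℝ) (j : Fin J1 × Fin J2) : ℝ :=
  α1 (θ.1.1 j.1) / (∑ i, α1 (θ.1.1 i)) * (α2 (θ.2.1 j.2) / (∑ i, α2 (θ.2.1 i))) *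
    (β (θ.1.1 j.1) (θ.2.1 j.2) / binWeight β θ j)

noncomputable def recoveryScore (α1 : V → ℝ) (α2 : W → ℝ) (ok : V → W → ℝ) : ℝ :=
  ∑ j, recoveryWeight β θ α1 α2 j * ok (θ.1.1 j.1) (θ.2.1 j.2)

variable {β}

lemma decoderWeight_nonneg (hβ : ∀ v w, 0 ≤ β v w) (n : Fin M1 × Fin M2)
    (j : Fin J1 × Fin J2) : 0 ≤ decoderWeight β θ n j :=
  mul_nonneg (mul_nonneg (ind_nonneg _) (ind_nonneg _)) (hβ _ _)

lemma le_binWeight (hβ : ∀ v w, 0 ≤ β v w) (j : Fin J1 × Fin J2) :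
    β (θ.1.1 j.1) (θ.2.1 j.2) ≤ binWeight β θ j := by
  have := single_le_sum (fun j' _ => decoderWeight_nonneg θ hβ (θ.1.2 j.1, θ.2.2 j.2) j')
    (mem_univ j)
  simpa [binWeight, decoderWeight, ind] using this

lemma recoveryWeight_nonneg {α1 : V → ℝ} {α2 : W → ℝ} (hα1 : ∀ v, 0 ≤ α1 v)
    (hα2 : ∀ w, 0 ≤ α2 w) (hβ : ∀ v w, 0 ≤ β v w) (j : Fin J1 × Fin J2) :
    0 ≤ recoveryWeight β θ α1 α2 j := by
  have hZ1 : 0 ≤ ∑ i, α1 (θ.1.1 i) := sum_nonneg fun i _ => hα1 _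
  have hZ2 : 0 ≤ ∑ i, α2 (θ.2.1 i) := sum_nonneg fun i _ => hα2 _
  have hW : 0 ≤ binWeight β θ j := (hβ _ _).trans (le_binWeight θ hβ j)
  exact mul_nonneg (mul_nonneg (div_nonneg (hα1 _) hZ1) (div_nonneg (hα2 _) hZ2))
    (div_nonneg (hβ _ _) hW)

lemma tangent_le_recoveryWeight {α1 : V → ℝ} {α2 : W → ℝ} (hα1 : ∀ v, 0 ≤ α1 v)
    (hα2 : ∀ w, 0 ≤ α2 w) (hβ : ∀ v w, 0 ≤ β v w) {j : Fin J1 × Fin J2} {u1 : V} {u2 : W}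
    (h1 : θ.1.1 j.1 = u1) (h2 : θ.2.1 j.2 = u2) (ha : 0 < α1 u1) (hb : 0 < α2 u2)
    (hr : 0 < β u1 u2) {p q w : ℝ} (hp : 0 < p) (hq : 0 < q) (hw : 0 < w) :
    α1 u1 * α2 u2 * β u1 u2 * (p * q * w)⁻¹ *
        (4 - (∑ i, α1 (θ.1.1 i)) / p - (∑ i, α2 (θ.2.1 i)) / q - binWeight β θ j / w) ≤
      recoveryWeight β θ α1 α2 j := by
  have hZ1 : α1 u1 ≤ ∑ i, α1 (θ.1.1 i) := h1 ▸ single_le_sum (fun i _ => hα1 _) (mem_univ j.1)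
  have hZ2 : α2 u2 ≤ ∑ i, α2 (θ.2.1 i) := h2 ▸ single_le_sum (fun i _ => hα2 _) (mem_univ j.2)
  have hW : β u1 u2 ≤ binWeight β θ j := h1 ▸ h2 ▸ le_binWeight θ hβ j
  have key := tangent_le_inv_mul_mul (ha.trans_le hZ1) (hb.trans_le hZ2) (hr.trans_le hW) hp hq hw
  rw [recoveryWeight, h1, h2]
  calc _ = α1 u1 * α2 u2 * β u1 u2 * ((p * q * w)⁻¹ * (4 - (∑ i, α1 (θ.1.1 i)) / p -
        (∑ i, α2 (θ.2.1 i)) / q - binWeight β θ j / w)) := by ring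
    _ ≤ α1 u1 * α2 u2 * β u1 u2 *
        ((∑ i, α1 (θ.1.1 i)) * (∑ i, α2 (θ.2.1 i)) * binWeight β θ j)⁻¹ :=
      mul_le_mul_of_nonneg_left key (by positivity)
    _ = _ := by ring

end Weights

section Moments

variable {V W : Type} [Fintype V] [Fintype W] {J1 J2 M1 M2 : ℕ} [NeZero M1] [NeZero M2]

noncomputable def law (w1 : FinPMF V) (w2 : FinPMF W) (J1 J2 M1 M2 : ℕ)
    [NeZero M1] [NeZero M2] : FinPMF (CodebookPair V W J1 J2 M1 M2) :=
  (BinnedCodebook.law w1 J1 M1).prod (BinnedCodebook.law w2 J2 M2)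

variable (w1 : FinPMF V) (w2 : FinPMF W)

lemma expect_ind_codewords (j : Fin J1 × Fin J2) (u1 : V) (u2 : W) :
    (law w1 w2 J1 J2 M1 M2).expect (fun θ => ind (θ.1.1 j.1 = u1) * ind (θ.2.1 j.2 = u2)) =
      w1.p u1 * w2.p u2 := by
  rw [law, expect_prod_mul _ _ (fun C : BinnedCodebook V J1 M1 => ind (C.1 j.1 = u1))
    (fun C : BinnedCodebook W J2 M2 => ind (C.1 j.2 = u2)),
    BinnedCodebook.expect_ind_codeword, BinnedCodebook.expect_ind_codeword]

lemma expect_ind_codewords_mul_sum_fst_le {α1 : V → ℝ} (hα1 : w1.IsSubDensity α1)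
    (j : Fin J1 × Fin J2) (u1 : V) (u2 : W) :
    (law w1 w2 J1 J2 M1 M2).expect
        (fun θ => ind (θ.1.1 j.1 = u1) * ind (θ.2.1 j.2 = u2) * ∑ i, α1 (θ.1.1 i)) ≤
      w1.p u1 * w2.p u2 * (α1 u1 + J1) := by
  simp_rw [mul_right_comm _ (ind (_ = u2))]
  rw [law, expect_prod_mul _ _
    (fun C : BinnedCodebook V J1 M1 => ind (C.1 j.1 = u1) * ∑ i, α1 (C.1 i))
    (fun C : BinnedCodebook W J2 M2 => ind (C.1 j.2 = u2)), BinnedCodebook.expect_ind_codeword]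
  have h1 := BinnedCodebook.expect_ind_codeword_mul_sum_le (M := M1) w1 j.1 u1 hα1.1
  have h2 : (J1 : ℝ) * w1.expect α1 ≤ J1 := mul_le_of_le_one_right (Nat.cast_nonneg J1) hα1.2
  calc _ ≤ w1.p u1 * (α1 u1 + J1 * w1.expect α1) * w2.p u2 :=
        mul_le_mul_of_nonneg_right h1 (w2.nonneg u2)
    _ ≤ w1.p u1 * (α1 u1 + J1) * w2.p u2 := mul_le_mul_of_nonneg_right
        (mul_le_mul_of_nonneg_left (by linarith) (w1.nonneg u1)) (w2.nonneg u2)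
    _ = _ := by ring

lemma expect_ind_codewords_mul_sum_snd_le {α2 : W → ℝ} (hα2 : w2.IsSubDensity α2)
    (j : Fin J1 × Fin J2) (u1 : V) (u2 : W) :
    (law w1 w2 J1 J2 M1 M2).expect
        (fun θ => ind (θ.1.1 j.1 = u1) * ind (θ.2.1 j.2 = u2) * ∑ i, α2 (θ.2.1 i)) ≤
      w1.p u1 * w2.p u2 * (α2 u2 + J2) := by
  simp_rw [mul_assoc]
  rw [law, expect_prod_mul _ _ (fun C : BinnedCodebook V J1 M1 => ind (C.1 j.1 = u1))
    (fun C : BinnedCodebook W J2 M2 => ind (C.1 j.2 = u2) * ∑ i, α2 (C.1 i)),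
    BinnedCodebook.expect_ind_codeword]
  have h1 := BinnedCodebook.expect_ind_codeword_mul_sum_le (M := M2) w2 j.2 u2 hα2.1
  have h2 : (J2 : ℝ) * w2.expect α2 ≤ J2 := mul_le_of_le_one_right (Nat.cast_nonneg J2) hα2.2
  calc _ ≤ w1.p u1 * (w2.p u2 * (α2 u2 + J2 * w2.expect α2)) :=
        mul_le_mul_of_nonneg_left h1 (w1.nonneg u1)
    _ ≤ w1.p u1 * (w2.p u2 * (α2 u2 + J2)) := mul_le_mul_of_nonneg_left
        (mul_le_mul_of_nonneg_left (by linarith) (w2.nonneg u2)) (w1.nonneg u1)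
    _ = _ := by ring

lemma expect_ind_codewords_mul_binWeight (β : V → W → ℝ) (j : Fin J1 × Fin J2) (u1 : V)
    (u2 : W) :
    (law w1 w2 J1 J2 M1 M2).expect
        (fun θ => ind (θ.1.1 j.1 = u1) * ind (θ.2.1 j.2 = u2) * binWeight β θ j) =
      ∑ v1, ∑ v2, β v1 v2 * (BinnedCodebook.binMateMass (M := M1) w1 j.1 u1 v1 *
        BinnedCodebook.binMateMass (M := M2) w2 j.2 u2 v2) := by
  have hterm : ∀ θ : CodebookPair V W J1 J2 M1 M2,
      ind (θ.1.1 j.1 = u1) * ind (θ.2.1 j.2 = u2) * binWeight β θ j =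
        ∑ i : Fin J1 × Fin J2, ind (θ.1.1 j.1 = u1) * ind (θ.1.2 i.1 = θ.1.2 j.1) *
          (ind (θ.2.1 j.2 = u2) * ind (θ.2.2 i.2 = θ.2.2 j.2)) * β (θ.1.1 i.1) (θ.2.1 i.2) := by
    intro θ
    simp only [binWeight, decoderWeight, mul_sum]
    exact sum_congr rfl fun i _ => by ring
  simp_rw [hterm, expect_sum]
  rw [sum_congr rfl fun i _ => expect_prod_mul_mul_apply (BinnedCodebook.law w1 J1 M1)
    (BinnedCodebook.law w2 J2 M2) (fun C => ind (C.1 j.1 = u1) * ind (C.2 i.1 = C.2 j.1))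
    (fun C => ind (C.1 j.2 = u2) * ind (C.2 i.2 = C.2 j.2)) (fun C => C.1 i.1) (fun C => C.1 i.2) β,
    sum_comm]
  refine sum_congr rfl fun v1 _ => ?_
  rw [sum_comm]
  refine sum_congr rfl fun v2 _ => ?_
  simp_rw [BinnedCodebook.binMateMass, Fintype.sum_mul_sum, mul_sum, Fintype.sum_prod_type]

lemma expect_ind_codewords_mul_binWeight_le {β : V → W → ℝ}
    (hrow : ∀ u1, w2.IsSubDensity (β u1)) (hcol : ∀ u2, w1.IsSubDensity (fun u1 => β u1 u2))
    (j : Fin J1 × Fin J2) (u1 : V) (u2 : W) :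
    (law w1 w2 J1 J2 M1 M2).expect
        (fun θ => ind (θ.1.1 j.1 = u1) * ind (θ.2.1 j.2 = u2) * binWeight β θ j) ≤
      w1.p u1 * w2.p u2 * (β u1 u2 + binningCost J1 J2 M1 M2) := by
  rw [expect_ind_codewords_mul_binWeight]
  calc _ ≤ ∑ v1, ∑ v2, β v1 v2 * ((w1.p u1 * (ind (u1 = v1) + J1 / M1 * w1.p v1)) *
          (w2.p u2 * (ind (u2 = v2) + J2 / M2 * w2.p v2))) :=
        sum_le_sum fun v1 _ => sum_le_sum fun v2 _ => mul_le_mul_of_nonneg_left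
          (mul_le_mul (BinnedCodebook.binMateMass_le w1 j.1 u1 v1)
            (BinnedCodebook.binMateMass_le w2 j.2 u2 v2)
            (BinnedCodebook.binMateMass_nonneg w2 j.2 u2 v2)
            ((BinnedCodebook.binMateMass_nonneg w1 j.1 u1 v1).trans
              (BinnedCodebook.binMateMass_le w1 j.1 u1 v1)))
          ((hrow v1).1 v2)
    _ = w1.p u1 * w2.p u2 * ∑ v1, ∑ v2, β v1 v2 *
          ((ind (u1 = v1) + J1 / M1 * w1.p v1) * (ind (u2 = v2) + J2 / M2 * w2.p v2)) := by
        simp only [mul_sum]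
        exact sum_congr rfl fun v1 _ => sum_congr rfl fun v2 _ => by ring
    _ ≤ w1.p u1 * w2.p u2 * (β u1 u2 + J2 / M2 + J1 / M1 + J1 / M1 * (J2 / M2)) :=
        mul_le_mul_of_nonneg_left (sum_sum_mul_ind_add_mul_le w1 w2 (fun v1 => (hrow v1).2)
          (fun v2 => (hcol v2).2) u1 u2 (by positivity) (by positivity))
          (mul_nonneg (w1.nonneg u1) (w2.nonneg u2))
    _ = _ := by unfold binningCost; ring

end Moments

section Jensen

variable {V W : Type} [Fintype V] [Fintype W] {J1 J2 M1 M2 : ℕ} [NeZero M1] [NeZero M2]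
  {w1 : FinPMF V} {w2 : FinPMF W} {α1 : V → ℝ} {α2 : W → ℝ} {β : V → W → ℝ}

lemma le_expect_ind_codewords_mul_tangent (hα1 : w1.IsSubDensity α1) (hα2 : w2.IsSubDensity α2)
    (hrow : ∀ u1, w2.IsSubDensity (β u1)) (hcol : ∀ u2, w1.IsSubDensity (fun u1 => β u1 u2))
    (j : Fin J1 × Fin J2) (u1 : V) (u2 : W) (hp : 0 < α1 u1 + J1) (hq : 0 < α2 u2 + J2)
    (hw : 0 < β u1 u2 + binningCost J1 J2 M1 M2) :
    w1.p u1 * w2.p u2 ≤ (law w1 w2 J1 J2 M1 M2).expect fun θ =>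
      ind (θ.1.1 j.1 = u1) * ind (θ.2.1 j.2 = u2) * (4 - (∑ i, α1 (θ.1.1 i)) / (α1 u1 + J1) -
        (∑ i, α2 (θ.2.1 i)) / (α2 u2 + J2) -
        binWeight β θ j / (β u1 u2 + binningCost J1 J2 M1 M2)) := by
  have hsplit : ∀ θ : CodebookPair V W J1 J2 M1 M2, ind (θ.1.1 j.1 = u1) * ind (θ.2.1 j.2 = u2) *
      (4 - (∑ i, α1 (θ.1.1 i)) / (α1 u1 + J1) - (∑ i, α2 (θ.2.1 i)) / (α2 u2 + J2) -
        binWeight β θ j / (β u1 u2 + binningCost J1 J2 M1 M2)) =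
      4 * (ind (θ.1.1 j.1 = u1) * ind (θ.2.1 j.2 = u2)) -
        ind (θ.1.1 j.1 = u1) * ind (θ.2.1 j.2 = u2) * (∑ i, α1 (θ.1.1 i)) / (α1 u1 + J1) -
        ind (θ.1.1 j.1 = u1) * ind (θ.2.1 j.2 = u2) * (∑ i, α2 (θ.2.1 i)) / (α2 u2 + J2) -
        ind (θ.1.1 j.1 = u1) * ind (θ.2.1 j.2 = u2) * binWeight β θ j /
          (β u1 u2 + binningCost J1 J2 M1 M2) := fun θ => by ring
  simp only [hsplit, expect_sub, expect_const_mul, expect_div_const, expect_ind_codewords]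
  have m1 := (div_le_iff₀ hp).mpr
    (expect_ind_codewords_mul_sum_fst_le (M1 := M1) (M2 := M2) w1 w2 hα1 j u1 u2)
  have m2 := (div_le_iff₀ hq).mpr
    (expect_ind_codewords_mul_sum_snd_le (M1 := M1) (M2 := M2) w1 w2 hα2 j u1 u2)
  have mW := (div_le_iff₀ hw).mpr
    (expect_ind_codewords_mul_binWeight_le (M1 := M1) (M2 := M2) w1 w2 hrow hcol j u1 u2)
  linarith

/-- Jensen's inequality for `(Z1, Z2, W) ↦ (Z1 Z2 W)⁻¹` on the event that the `j`-th codewords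
are `(u1, u2)`. -/
lemma le_expect_ind_codewords_mul_recoveryWeight (hα1 : w1.IsSubDensity α1)
    (hα2 : w2.IsSubDensity α2) (hrow : ∀ u1, w2.IsSubDensity (β u1))
    (hcol : ∀ u2, w1.IsSubDensity (fun u1 => β u1 u2)) (j : Fin J1 × Fin J2) (u1 : V) (u2 : W) :
    w1.p u1 * w2.p u2 * (α1 u1 * α2 u2 * β u1 u2) /
        ((α1 u1 + J1) * (α2 u2 + J2) * (β u1 u2 + binningCost J1 J2 M1 M2)) ≤
      (law w1 w2 J1 J2 M1 M2).expect (fun θ =>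
        ind (θ.1.1 j.1 = u1) * ind (θ.2.1 j.2 = u2) * recoveryWeight β θ α1 α2 j) := by
  have hβ : ∀ v w, 0 ≤ β v w := fun v w => (hrow v).1 w
  rcases (mul_nonneg (mul_nonneg (hα1.1 u1) (hα2.1 u2)) (hβ u1 u2)).eq_or_lt with h0 | hpos
  · rw [← h0, mul_zero, zero_div]
    exact expect_nonneg _ fun θ => mul_nonneg (mul_nonneg (ind_nonneg _) (ind_nonneg _))
      (recoveryWeight_nonneg θ hα1.1 hα2.1 hβ j)
  have ha : 0 < α1 u1 := (hα1.1 u1).lt_of_ne fun h => by simp [← h] at hpos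
  have hb : 0 < α2 u2 := (hα2.1 u2).lt_of_ne fun h => by simp [← h] at hpos
  have hr : 0 < β u1 u2 := (hβ u1 u2).lt_of_ne fun h => by simp [← h] at hpos
  have hw : 0 < β u1 u2 + binningCost J1 J2 M1 M2 := by unfold binningCost; positivity
  have htangent := le_expect_ind_codewords_mul_tangent hα1 hα2 hrow hcol j u1 u2 (by positivity)
    (by positivity) hw
  set p := α1 u1 + J1
  set q := α2 u2 + J2
  set w := β u1 u2 + binningCost J1 J2 M1 M2
  have hc : 0 ≤ α1 u1 * α2 u2 * β u1 u2 * (p * q * w)⁻¹ := by positivity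
  calc _ = α1 u1 * α2 u2 * β u1 u2 * (p * q * w)⁻¹ * (w1.p u1 * w2.p u2) := by ring
    _ ≤ _ := mul_le_mul_of_nonneg_left htangent hc
    _ = _ := (expect_const_mul _ _ _).symm
    _ ≤ _ := expect_mono _ fun θ => ?_
  by_cases h : θ.1.1 j.1 = u1 ∧ θ.2.1 j.2 = u2
  · simpa [ind, h.1, h.2] using tangent_le_recoveryWeight θ hα1.1 hα2.1 hβ h.1 h.2 ha hb hr
      (by positivity) (by positivity) hw
  · have hG : ind (θ.1.1 j.1 = u1) * ind (θ.2.1 j.2 = u2) = 0 := by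
      simp only [ind]
      split_ifs <;> simp_all
    simp [hG]

lemma le_expect_recoveryScore (hα1 : w1.IsSubDensity α1) (hα2 : w2.IsSubDensity α2)
    (hrow : ∀ u1, w2.IsSubDensity (β u1)) (hcol : ∀ u2, w1.IsSubDensity (fun u1 => β u1 u2))
    {ok : V → W → ℝ} (hok : ∀ u1 u2, 0 ≤ ok u1 u2) :
    ∑ u1, ∑ u2, ok u1 u2 * (J1 * J2 * (w1.p u1 * w2.p u2 * (α1 u1 * α2 u2 * β u1 u2) /
        ((α1 u1 + J1) * (α2 u2 + J2) * (β u1 u2 + binningCost J1 J2 M1 M2)))) ≤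
      (law w1 w2 J1 J2 M1 M2).expect (fun θ => recoveryScore β θ α1 α2 ok) := by
  have hsplit : ∀ θ : CodebookPair V W J1 J2 M1 M2, recoveryScore β θ α1 α2 ok =
      ∑ j, ∑ u1, ∑ u2, ok u1 u2 *
        (ind (θ.1.1 j.1 = u1) * ind (θ.2.1 j.2 = u2) * recoveryWeight β θ α1 α2 j) := by
    intro θ
    refine sum_congr rfl fun j _ => ?_
    simp_rw [show ∀ u1 u2, ok u1 u2 *
        (ind (θ.1.1 j.1 = u1) * ind (θ.2.1 j.2 = u2) * recoveryWeight β θ α1 α2 j) =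
        ind (θ.1.1 j.1 = u1) * (ind (θ.2.1 j.2 = u2) * (recoveryWeight β θ α1 α2 j * ok u1 u2))
        from fun u1 u2 => by ring, ← mul_sum, sum_ind_mul]
  calc _ = ∑ j : Fin J1 × Fin J2, ∑ u1, ∑ u2, ok u1 u2 * (w1.p u1 * w2.p u2 *
        (α1 u1 * α2 u2 * β u1 u2) /
          ((α1 u1 + J1) * (α2 u2 + J2) * (β u1 u2 + binningCost J1 J2 M1 M2))) := by
        simp only [sum_const, card_univ, Fintype.card_prod, Fintype.card_fin, nsmul_eq_mul,
          mul_sum]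
        push_cast
        exact sum_congr rfl fun u1 _ => sum_congr rfl fun u2 _ => by ring
    _ ≤ _ := by
        simp_rw [hsplit, expect_sum, expect_const_mul]
        exact sum_le_sum fun j _ => sum_le_sum fun u1 _ => sum_le_sum fun u2 _ =>
          mul_le_mul_of_nonneg_left
            (le_expect_ind_codewords_mul_recoveryWeight hα1 hα2 hrow hcol j u1 u2) (hok u1 u2)

end Jensen

section Code

variable {V W : Type} {J1 J2 M1 M2 : ℕ} [NeZero J1] [NeZero J2]

noncomputable def likelihoodDecoder (θ : CodebookPair V W J1 J2 M1 M2) {β : V → W → ℝ}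
    (hβ : ∀ v w, 0 ≤ β v w) (g1 : V → W → R1) (g2 : V → W → R2) (n : Fin M1 × Fin M2) :
    FinPMF (R1 × R2) :=
  (normalize (decoderWeight β θ n) (decoderWeight_nonneg θ hβ n)).map
    fun j => (g1 (θ.1.1 j.1) (θ.2.1 j.2), g2 (θ.1.1 j.1) (θ.2.1 j.2))

lemma div_binWeight_le_normalize (θ : CodebookPair V W J1 J2 M1 M2) {β : V → W → ℝ}
    (hβ : ∀ v w, 0 ≤ β v w) (j : Fin J1 × Fin J2) :
    β (θ.1.1 j.1) (θ.2.1 j.2) / binWeight β θ j ≤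
      (normalize (decoderWeight β θ (θ.1.2 j.1, θ.2.2 j.2)) (decoderWeight_nonneg θ hβ _)).p j := by
  simpa [binWeight, decoderWeight, ind] using
    div_sum_le_normalize _ (decoderWeight_nonneg θ hβ (θ.1.2 j.1, θ.2.2 j.2)) j

lemma sum_mul_recoveryScore_le_pNoExcessBT (θ : CodebookPair V W J1 J2 M1 M2)
    (qS : FinPMF (S1 × S2)) {α1 : S1 → V → ℝ} {α2 : S2 → W → ℝ} {β : V → W → ℝ}
    (hα1 : ∀ s v, 0 ≤ α1 s v) (hα2 : ∀ s w, 0 ≤ α2 s w) (hβ : ∀ v w, 0 ≤ β v w)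
    (g1 : V → W → R1) (g2 : V → W → R2) (d1 : S1 → R1 → ℝ) (d2 : S2 → R2 → ℝ) (D1 D2 : ℝ) :
    ∑ s1, ∑ s2, qS.p (s1, s2) * recoveryScore β θ (α1 s1) (α2 s2)
        (fun v w => ind (d1 s1 (g1 v w) ≤ D1 ∧ d2 s2 (g2 v w) ≤ D2)) ≤
      pNoExcessBT M1 M2 qS d1 d2 D1 D2 (θ.1.likelihoodEncoder α1 hα1)
        (θ.2.likelihoodEncoder α2 hα2) (θ.likelihoodDecoder hβ g1 g2) := by
  rw [pNoExcessBT_eq]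
  refine sum_le_sum fun s1 _ => sum_le_sum fun s2 _ => mul_le_mul_of_nonneg_left ?_ (qS.nonneg _)
  simp only [BinnedCodebook.likelihoodEncoder, likelihoodDecoder, expect_map]
  set ok := fun v w => ind (d1 s1 (g1 v w) ≤ D1 ∧ d2 s2 (g2 v w) ≤ D2)
  have hdec : ∀ j : Fin J1 × Fin J2, β (θ.1.1 j.1) (θ.2.1 j.2) / binWeight β θ j *
      ok (θ.1.1 j.1) (θ.2.1 j.2) ≤ (normalize (decoderWeight β θ (θ.1.2 j.1, θ.2.2 j.2))
        (decoderWeight_nonneg θ hβ _)).expect fun j' => ok (θ.1.1 j'.1) (θ.2.1 j'.2) :=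
    fun j => (mul_le_mul_of_nonneg_right (div_binWeight_le_normalize θ hβ j) (ind_nonneg _)).trans
      (mul_le_expect _ (F := fun j' => ok (θ.1.1 j'.1) (θ.2.1 j'.2)) (fun _ => ind_nonneg _) j)
  have hZ1 : ∀ i, 0 ≤ α1 s1 (θ.1.1 i) / ∑ i', α1 s1 (θ.1.1 i') := fun i =>
    div_nonneg (hα1 _ _) (sum_nonneg fun _ _ => hα1 _ _)
  have hZ2 : ∀ i, 0 ≤ α2 s2 (θ.2.1 i) / ∑ i', α2 s2 (θ.2.1 i') := fun i =>
    div_nonneg (hα2 _ _) (sum_nonneg fun _ _ => hα2 _ _)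
  calc recoveryScore β θ (α1 s1) (α2 s2) ok
      = ∑ i1, α1 s1 (θ.1.1 i1) / (∑ i, α1 s1 (θ.1.1 i)) * ∑ i2, α2 s2 (θ.2.1 i2) /
          (∑ i, α2 s2 (θ.2.1 i)) * (β (θ.1.1 i1) (θ.2.1 i2) / binWeight β θ (i1, i2) *
            ok (θ.1.1 i1) (θ.2.1 i2)) := by
        simp only [recoveryScore, recoveryWeight, Fintype.sum_prod_type, mul_sum]
        exact sum_congr rfl fun i1 _ => sum_congr rfl fun i2 _ => by ring
    _ ≤ _ := sum_mul_le_expect _ hZ1 (div_sum_le_normalize _ _)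
        (fun i1 => sum_mul_le_expect _ hZ2 (div_sum_le_normalize _ _) (fun i2 => hdec (i1, i2))
          fun _ => expect_nonneg _ fun _ => ind_nonneg _)
        fun _ => expect_nonneg _ fun _ => expect_nonneg _ fun _ => ind_nonneg _

end Code

end CodebookPair

section BergerTung

variable (qS : FinPMF (S1 × S2)) (qU1 : S1 → FinPMF U1) (qU2 : S2 → FinPMF U2)

/-! `rS1U1`, `rS2U2`, `rU1U2` are `2 ^ iS1U1`, `2 ^ iS2U2`, `2 ^ iU1U2` wherever the joint pmf is
positive; unlike the information densities they carry no junk value of `logb` at `0`. -/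

noncomputable def rS1U1 (s1 : S1) (u1 : U1) : ℝ := (qU1 s1).p u1 / mU1m qS qU1 u1

noncomputable def rS2U2 (s2 : S2) (u2 : U2) : ℝ := (qU2 s2).p u2 / mU2m qS qU2 u2

noncomputable def rU1U2 (u1 : U1) (u2 : U2) : ℝ :=
  mU1U2 qS qU1 qU2 u1 u2 / (mU1m qS qU1 u1 * mU2m qS qU2 u2)

lemma sum_mU1U2_right (u1 : U1) : ∑ u2, mU1U2 qS qU1 qU2 u1 u2 = mU1m qS qU1 u1 := by
  simp only [mU1U2, qBT, mU1m, mS1, sum_mul]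
  rw [sum_comm]
  refine sum_congr rfl fun s1 _ => ?_
  rw [sum_comm]
  exact sum_congr rfl fun s2 _ => by rw [← mul_sum, (qU2 s2).sum_eq_one, mul_one]

lemma sum_mU1U2_left (u2 : U2) : ∑ u1, mU1U2 qS qU1 qU2 u1 u2 = mU2m qS qU2 u2 := by
  simp only [mU1U2, qBT, mU2m, mS2, sum_mul]
  rw [sum_comm, sum_comm (f := fun s2 s1 => qS.p (s1, s2) * (qU2 s2).p u2)]
  refine sum_congr rfl fun s1 _ => ?_
  rw [sum_comm]
  refine sum_congr rfl fun s2 _ => ?_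
  simp_rw [mul_right_comm _ ((qU1 s1).p _)]
  rw [← mul_sum, (qU1 s1).sum_eq_one, mul_one]

lemma isSubDensity_rS1U1 (s1 : S1) : (qS.fst.bind qU1).IsSubDensity (rS1U1 qS qU1 s1) :=
  ⟨fun u1 => div_nonneg ((qU1 s1).nonneg u1) ((qS.fst.bind qU1).nonneg u1),
    ((qS.fst.bind qU1).expect_div_p_le (qU1 s1).nonneg).trans (qU1 s1).sum_eq_one.le⟩

lemma isSubDensity_rS2U2 (s2 : S2) : (qS.snd.bind qU2).IsSubDensity (rS2U2 qS qU2 s2) :=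
  ⟨fun u2 => div_nonneg ((qU2 s2).nonneg u2) ((qS.snd.bind qU2).nonneg u2),
    ((qS.snd.bind qU2).expect_div_p_le (qU2 s2).nonneg).trans (qU2 s2).sum_eq_one.le⟩

lemma qBT_nonneg (s1 : S1) (s2 : S2) (u1 : U1) (u2 : U2) : 0 ≤ qBT qS qU1 qU2 s1 s2 u1 u2 :=
  mul_nonneg (mul_nonneg (qS.nonneg _) ((qU1 s1).nonneg u1)) ((qU2 s2).nonneg u2)

lemma mU1U2_nonneg (u1 : U1) (u2 : U2) : 0 ≤ mU1U2 qS qU1 qU2 u1 u2 :=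
  sum_nonneg fun s1 _ => sum_nonneg fun s2 _ => qBT_nonneg qS qU1 qU2 s1 s2 u1 u2

lemma isSubDensity_rU1U2_left (u1 : U1) :
    (qS.snd.bind qU2).IsSubDensity (rU1U2 qS qU1 qU2 u1) := by
  have hx : ∀ u2, 0 ≤ mU1U2 qS qU1 qU2 u1 u2 / mU1m qS qU1 u1 := fun u2 =>
    div_nonneg (mU1U2_nonneg qS qU1 qU2 u1 u2) ((qS.fst.bind qU1).nonneg u1)
  have heq : rU1U2 qS qU1 qU2 u1 =
      fun u2 => mU1U2 qS qU1 qU2 u1 u2 / mU1m qS qU1 u1 / (qS.snd.bind qU2).p u2 :=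
    funext fun u2 => (div_div _ _ _).symm
  rw [heq]
  refine ⟨fun u2 => div_nonneg (hx u2) ((qS.snd.bind qU2).nonneg u2),
    ((qS.snd.bind qU2).expect_div_p_le hx).trans ?_⟩
  rw [← sum_div, sum_mU1U2_right]
  exact div_self_le_one _

lemma isSubDensity_rU1U2_right (u2 : U2) :
    (qS.fst.bind qU1).IsSubDensity (fun u1 => rU1U2 qS qU1 qU2 u1 u2) := by
  have hx : ∀ u1, 0 ≤ mU1U2 qS qU1 qU2 u1 u2 / mU2m qS qU2 u2 := fun u1 =>
    div_nonneg (mU1U2_nonneg qS qU1 qU2 u1 u2) ((qS.snd.bind qU2).nonneg u2)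
  have heq : (fun u1 => rU1U2 qS qU1 qU2 u1 u2) =
      fun u1 => mU1U2 qS qU1 qU2 u1 u2 / mU2m qS qU2 u2 / (qS.fst.bind qU1).p u1 :=
    funext fun u1 => by rw [rU1U2, mul_comm, div_div]; rfl
  rw [heq]
  refine ⟨fun u1 => div_nonneg (hx u1) ((qS.fst.bind qU1).nonneg u1),
    ((qS.fst.bind qU1).expect_div_p_le hx).trans ?_⟩
  rw [← sum_div, sum_mU1U2_left]
  exact div_self_le_one _

lemma qBT_le_mU1U2 (s1 : S1) (s2 : S2) (u1 : U1) (u2 : U2) :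
    qBT qS qU1 qU2 s1 s2 u1 u2 ≤ mU1U2 qS qU1 qU2 u1 u2 :=
  (single_le_sum (fun s _ => qBT_nonneg qS qU1 qU2 s1 s u1 u2) (mem_univ s2)).trans
    (single_le_sum (fun s _ => sum_nonneg fun s' _ => qBT_nonneg qS qU1 qU2 s s' u1 u2)
      (mem_univ s1))

lemma two_rpow_iS1U1 {s1 : S1} {u1 : U1} (hs : 0 < mS1 qS s1) (hu : 0 < (qU1 s1).p u1) :
    (2 : ℝ) ^ iS1U1 qS qU1 s1 u1 = rS1U1 qS qU1 s1 u1 := by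
  have hm : 0 < mU1m qS qU1 u1 := (mul_pos hs hu).trans_le (qS.fst.mul_le_bind qU1 s1 u1)
  rw [iS1U1, mul_div_mul_left _ _ hs.ne']
  exact Real.rpow_logb (by norm_num) (by norm_num) (div_pos hu hm)

lemma two_rpow_iS2U2 {s2 : S2} {u2 : U2} (hs : 0 < mS2 qS s2) (hu : 0 < (qU2 s2).p u2) :
    (2 : ℝ) ^ iS2U2 qS qU2 s2 u2 = rS2U2 qS qU2 s2 u2 := by
  have hm : 0 < mU2m qS qU2 u2 := (mul_pos hs hu).trans_le (qS.snd.mul_le_bind qU2 s2 u2)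
  rw [iS2U2, mul_div_mul_left _ _ hs.ne']
  exact Real.rpow_logb (by norm_num) (by norm_num) (div_pos hu hm)

lemma two_rpow_neg_iU1U2 {u1 : U1} {u2 : U2} (h : 0 < mU1U2 qS qU1 qU2 u1 u2) :
    (2 : ℝ) ^ (-iU1U2 qS qU1 qU2 u1 u2) = (rU1U2 qS qU1 qU2 u1 u2)⁻¹ := by
  have hm1 : 0 < mU1m qS qU1 u1 := h.trans_le <| sum_mU1U2_right qS qU1 qU2 u1 ▸
    single_le_sum (fun v _ => mU1U2_nonneg qS qU1 qU2 u1 v) (mem_univ u2)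
  have hm2 : 0 < mU2m qS qU2 u2 := h.trans_le <| sum_mU1U2_left qS qU1 qU2 u2 ▸
    single_le_sum (fun v _ => mU1U2_nonneg qS qU1 qU2 v u2) (mem_univ u1)
  rw [Real.rpow_neg (by norm_num), iU1U2,
    Real.rpow_logb (by norm_num) (by norm_num) (div_pos h (mul_pos hm1 hm2)), rU1U2]

lemma qBT_mul_mul_inv_le {J1 J2 : ℕ} (hJ1 : 0 < J1) (hJ2 : 0 < J2) {K : ℝ} (hK : 0 ≤ K)
    (s1 : S1) (s2 : S2) (u1 : U1) (u2 : U2) {X : ℝ} (hX : 0 ≤ X) :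
    qBT qS qU1 qU2 s1 s2 u1 u2 * X *
      ((1 + (J1 : ℝ)⁻¹ * (2 : ℝ) ^ (iS1U1 qS qU1 s1 u1)) *
        (1 + (J2 : ℝ)⁻¹ * (2 : ℝ) ^ (iS2U2 qS qU2 s2 u2)) *
        (1 + K * (2 : ℝ) ^ (-(iU1U2 qS qU1 qU2 u1 u2))))⁻¹ ≤
      qS.p (s1, s2) * (X * (J1 * J2 * (mU1m qS qU1 u1 * mU2m qS qU2 u2 *
        (rS1U1 qS qU1 s1 u1 * rS2U2 qS qU2 s2 u2 * rU1U2 qS qU1 qU2 u1 u2) /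
        ((rS1U1 qS qU1 s1 u1 + J1) * (rS2U2 qS qU2 s2 u2 + J2) *
          (rU1U2 qS qU1 qU2 u1 u2 + K))))) := by
  rcases (qBT_nonneg qS qU1 qU2 s1 s2 u1 u2).eq_or_lt with h0 | hpos
  · have ha := (isSubDensity_rS1U1 qS qU1 s1).1 u1
    have hb := (isSubDensity_rS2U2 qS qU2 s2).1 u2
    have hr := (isSubDensity_rU1U2_left qS qU1 qU2 u1).1 u2
    have hm1 := (qS.fst.bind qU1).nonneg u1
    have hm2 := (qS.snd.bind qU2).nonneg u2
    have hq := qS.nonneg (s1, s2)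
    rw [← h0, zero_mul, zero_mul]
    positivity
  have hne := hpos.ne'
  simp only [qBT, ne_eq, mul_eq_zero, not_or] at hne
  obtain ⟨⟨hq, hu1⟩, hu2⟩ := hne
  replace hq := (qS.nonneg _).lt_of_ne' hq
  replace hu1 := ((qU1 s1).nonneg u1).lt_of_ne' hu1
  replace hu2 := ((qU2 s2).nonneg u2).lt_of_ne' hu2
  have hs1 := hq.trans_le (qS.p_le_fst s1 s2)
  have hs2 := hq.trans_le (qS.p_le_snd s1 s2)
  have hm12 := hpos.trans_le (qBT_le_mU1U2 qS qU1 qU2 s1 s2 u1 u2)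
  have hm1 : 0 < mU1m qS qU1 u1 := (mul_pos hs1 hu1).trans_le (qS.fst.mul_le_bind qU1 s1 u1)
  have hm2 : 0 < mU2m qS qU2 u2 := (mul_pos hs2 hu2).trans_le (qS.snd.mul_le_bind qU2 s2 u2)
  rw [two_rpow_iS1U1 qS qU1 hs1 hu1, two_rpow_iS2U2 qS qU2 hs2 hu2,
    two_rpow_neg_iU1U2 qS qU1 qU2 hm12]
  apply le_of_eq
  simp only [qBT, rS1U1, rS2U2, rU1U2]
  field_simp
  ring

end BergerTung

theorem oneShot_berger_tung_general (qS : FinPMF (S1 × S2)) (qU1 : S1 → FinPMF U1)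
    (qU2 : S2 → FinPMF U2) (d1 : S1 → R1 → ℝ) (d2 : S2 → R2 → ℝ)
    (D1 D2 : ℝ)
    (g1 : U1 → U2 → R1) (g2 : U1 → U2 → R2)
    (M1 M2 J1 J2 : ℕ) (hM1 : 1 ≤ M1) (hM2 : 1 ≤ M2) (hJ1 : M1 ≤ J1) (hJ2 : M2 ≤ J2) :
    ∃ (enc1 : S1 → FinPMF (Fin M1)) (enc2 : S2 → FinPMF (Fin M2))
      (dec : Fin M1 × Fin M2 → FinPMF (R1 × R2)),
      pNoExcessBT M1 M2 qS d1 d2 D1 D2 enc1 enc2 dec ≥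
        ∑ s1 : S1, ∑ s2 : S2, ∑ u1 : U1, ∑ u2 : U2,
          qBT qS qU1 qU2 s1 s2 u1 u2 *
          ind (d1 s1 (g1 u1 u2) ≤ D1 ∧ d2 s2 (g2 u1 u2) ≤ D2) *
          ((1 + (J1 : ℝ)⁻¹ * (2 : ℝ) ^ (iS1U1 qS qU1 s1 u1)) *
           (1 + (J2 : ℝ)⁻¹ * (2 : ℝ) ^ (iS2U2 qS qU2 s2 u2)) *
           (1 + ((J2 : ℝ) * (M2 : ℝ)⁻¹ + (J1 : ℝ) * (M1 : ℝ)⁻¹ +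
                 (J1 : ℝ) * (J2 : ℝ) * ((M1 : ℝ) * (M2 : ℝ))⁻¹) *
                (2 : ℝ) ^ (-(iU1U2 qS qU1 qU2 u1 u2))))⁻¹ := by
  have : NeZero M1 := ⟨by omega⟩
  have : NeZero M2 := ⟨by omega⟩
  have : NeZero J1 := ⟨by omega⟩
  have : NeZero J2 := ⟨by omega⟩
  have hα1 := isSubDensity_rS1U1 qS qU1
  have hα2 := isSubDensity_rS2U2 qS qU2
  have hrow := isSubDensity_rU1U2_left qS qU1 qU2
  have hcol := isSubDensity_rU1U2_right qS qU1 qU2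
  obtain ⟨θ, hθ⟩ :=
    (CodebookPair.law (qS.fst.bind qU1) (qS.snd.bind qU2) J1 J2 M1 M2).exists_expect_le
      fun θ => ∑ s1, ∑ s2, qS.p (s1, s2) * CodebookPair.recoveryScore (rU1U2 qS qU1 qU2) θ
        (rS1U1 qS qU1 s1) (rS2U2 qS qU2 s2)
        fun u1 u2 => ind (d1 s1 (g1 u1 u2) ≤ D1 ∧ d2 s2 (g2 u1 u2) ≤ D2)
  refine ⟨θ.1.likelihoodEncoder _ fun s => (hα1 s).1, θ.2.likelihoodEncoder _ fun s => (hα2 s).1,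
    θ.likelihoodDecoder (fun u => (hrow u).1) g1 g2, le_trans ?_ (hθ.trans
      (CodebookPair.sum_mul_recoveryScore_le_pNoExcessBT θ qS _ _ _ g1 g2 d1 d2 D1 D2))⟩
  simp only [expect_sum, expect_const_mul]
  refine sum_le_sum fun s1 _ => sum_le_sum fun s2 _ => le_trans ?_ <| mul_le_mul_of_nonneg_left
    (CodebookPair.le_expect_recoveryScore (hα1 s1) (hα2 s2) hrow hcol fun _ _ => ind_nonneg _)
    (qS.nonneg _)
  simp only [mul_sum]
  exact sum_le_sum fun u1 _ => sum_le_sum fun u2 _ =>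
    qBT_mul_mul_inv_le qS qU1 qU2 (by omega) (by omega) (by positivity) s1 s2 u1 u2 (ind_nonneg _)

/-- One-shot Berger–Tung achievability. -/
theorem oneShot_berger_tung (qS : FinPMF (S1 × S2)) (qU1 : S1 → FinPMF U1)
    (qU2 : S2 → FinPMF U2) (d1 : S1 → R1 → ℝ) (d2 : S2 → R2 → ℝ)
    (hd1 : ∀ s r, 0 ≤ d1 s r) (hd2 : ∀ s r, 0 ≤ d2 s r)
    (D1 D2 : ℝ) (hD1 : 0 ≤ D1) (hD2 : 0 ≤ D2)
    (g1 : U1 → U2 → R1) (g2 : U1 → U2 → R2)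
    (M1 M2 J1 J2 : ℕ) (hM1 : 1 ≤ M1) (hM2 : 1 ≤ M2) (hJ1 : M1 ≤ J1) (hJ2 : M2 ≤ J2) :
    ∃ (enc1 : S1 → FinPMF (Fin M1)) (enc2 : S2 → FinPMF (Fin M2))
      (dec : Fin M1 × Fin M2 → FinPMF (R1 × R2)),
      pNoExcessBT M1 M2 qS d1 d2 D1 D2 enc1 enc2 dec ≥
        ∑ s1 : S1, ∑ s2 : S2, ∑ u1 : U1, ∑ u2 : U2,
          qBT qS qU1 qU2 s1 s2 u1 u2 *
          ind (d1 s1 (g1 u1 u2) ≤ D1 ∧ d2 s2 (g2 u1 u2) ≤ D2) *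
          ((1 + (J1 : ℝ)⁻¹ * (2 : ℝ) ^ (iS1U1 qS qU1 s1 u1)) *
           (1 + (J2 : ℝ)⁻¹ * (2 : ℝ) ^ (iS2U2 qS qU2 s2 u2)) *
           (1 + ((J2 : ℝ) * (M2 : ℝ)⁻¹ + (J1 : ℝ) * (M1 : ℝ)⁻¹ +
                 (J1 : ℝ) * (J2 : ℝ) * ((M1 : ℝ) * (M2 : ℝ))⁻¹) *
                (2 : ℝ) ^ (-(iU1U2 qS qU1 qU2 u1 u2))))⁻¹ :=
  oneShot_berger_tung_general qS qU1 qU2 d1 d2 D1 D2 g1 g2 M1 M2 J1 J2 hM1 hM2 hJ1 hJ2
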